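/- Fix a real τ with 0 < τ < 1. Define for an integer d ≥ 1 and real t ≥ 0 the normalized gradient-descent loss r_d(t) = (1/H_{d,1}) · Σ_{k=1}^d k^{−1}(1 − k^{−1})^{2t}, where H_{d,1} = Σ_{k=1}^d k^{−1}. Then lim_{d→∞} r_d(d^τ/2) = 1 − τ. -/

import Mathlib

/-!
Put `T = d^τ`. The factor `(1 - 1/k)^T` is increasing in `k`; it is at most `exp (-T/k)`,
hence negligible for `k ≤ d^σ` with `σ < τ`, and at least `1 - T/k` (Bernoulli), hence close
to `1` for `k ≥ d^σ` with `σ > τ`. So the normalized loss is squeezed between harmonic tails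
`(H_d - H_{⌊d^σ⌋}) / H_d`, which tend to `1 - σ` because `H_n = log n + O(1)`; letting
`σ → τ` from both sides gives the limit `1 - τ`.
-/

open Filter Finset Real Topology

/-- The unnormalized loss at time `t = T / 2`. -/
noncomputable def zipfLoss (T : ℝ) (d : ℕ) : ℝ :=
  ∑ k ∈ Icc 1 d, (k : ℝ)⁻¹ * (1 - (k : ℝ)⁻¹) ^ T

lemma sum_Icc_one_eq_add_sum_Ioc (f : ℕ → ℝ) {K d : ℕ} (hKd : K ≤ d) :
    ∑ k ∈ Icc 1 d, f k = ∑ k ∈ Icc 1 K, f k + ∑ k ∈ Ioc K d, f k := by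
  have hIoc (n : ℕ) : Icc 1 n = Ioc 0 n := Icc_add_one_left_eq_Ioc 0 n
  rw [hIoc, hIoc, sum_Ioc_consecutive f (Nat.zero_le K) hKd]

lemma sum_Icc_inv_natCast_eq_harmonic (n : ℕ) :
    ∑ k ∈ Icc 1 n, (k : ℝ)⁻¹ = harmonic n := by
  simp [harmonic_eq_sum_Icc]

lemma sum_Ioc_inv_natCast_eq_harmonic_sub {K d : ℕ} (hKd : K ≤ d) :
    ∑ k ∈ Ioc K d, (k : ℝ)⁻¹ = harmonic d - harmonic K := by
  rw [← sum_Icc_inv_natCast_eq_harmonic, ← sum_Icc_inv_natCast_eq_harmonic,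
    sum_Icc_one_eq_add_sum_Ioc _ hKd, add_sub_cancel_left]

lemma harmonic_le_harmonic {K d : ℕ} (hKd : K ≤ d) : (harmonic K : ℝ) ≤ harmonic d := by
  rw [← sub_nonneg, ← sum_Ioc_inv_natCast_eq_harmonic_sub hKd]
  positivity

lemma one_sub_inv_natCast_rpow_le {T : ℝ} (hT : 0 ≤ T) {k K : ℕ} (hk : 0 < k)
    (hkK : k ≤ K) :
    (1 - (k : ℝ)⁻¹) ^ T ≤ (1 - (K : ℝ)⁻¹) ^ T :=
  rpow_le_rpow (sub_nonneg.2 (Nat.cast_inv_le_one k))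
    (sub_le_sub_left (inv_anti₀ (by positivity) (by exact_mod_cast hkK)) 1) hT

lemma zipfLoss_le {T : ℝ} (hT : 0 ≤ T) {K d : ℕ} (hKd : K ≤ d) :
    zipfLoss T d ≤ (1 - (K : ℝ)⁻¹) ^ T * harmonic d + (harmonic d - harmonic K) := by
  rw [zipfLoss, sum_Icc_one_eq_add_sum_Ioc _ hKd, ← sum_Ioc_inv_natCast_eq_harmonic_sub hKd]
  gcongr ?_ + ?_
  · calc ∑ k ∈ Icc 1 K, (k : ℝ)⁻¹ * (1 - (k : ℝ)⁻¹) ^ T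
        ≤ ∑ k ∈ Icc 1 K, (k : ℝ)⁻¹ * (1 - (K : ℝ)⁻¹) ^ T := by
          refine sum_le_sum fun k hk => mul_le_mul_of_nonneg_left ?_ (by positivity)
          exact one_sub_inv_natCast_rpow_le hT (mem_Icc.1 hk).1 (mem_Icc.1 hk).2
      _ = (1 - (K : ℝ)⁻¹) ^ T * harmonic K := by
          rw [← sum_mul, sum_Icc_inv_natCast_eq_harmonic, mul_comm]
      _ ≤ (1 - (K : ℝ)⁻¹) ^ T * harmonic d := by
          exact mul_le_mul_of_nonneg_left (harmonic_le_harmonic hKd)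
            (rpow_nonneg (sub_nonneg.2 (Nat.cast_inv_le_one K)) T)
  · gcongr with k
    exact mul_le_of_le_one_right (by positivity)
      (rpow_le_one (sub_nonneg.2 (Nat.cast_inv_le_one k)) (sub_le_self _ (by positivity)) hT)

lemma le_zipfLoss {T : ℝ} (hT : 0 ≤ T) {K d : ℕ} (hK : 0 < K) (hKd : K ≤ d) :
    (1 - (K : ℝ)⁻¹) ^ T * (harmonic d - harmonic K) ≤ zipfLoss T d := by
  rw [← sum_Ioc_inv_natCast_eq_harmonic_sub hKd, mul_sum, zipfLoss,
    sum_Icc_one_eq_add_sum_Ioc _ hKd]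
  refine le_add_of_nonneg_of_le (sum_nonneg fun k _ => ?_) (sum_le_sum fun k hk => ?_)
  · exact mul_nonneg (by positivity) (rpow_nonneg (sub_nonneg.2 (Nat.cast_inv_le_one k)) T)
  · rw [mul_comm]
    refine mul_le_mul_of_nonneg_left ?_ (by positivity)
    exact one_sub_inv_natCast_rpow_le hT hK (mem_Ioc.1 hk).1.le

lemma one_sub_rpow_le_exp_neg_mul {x T : ℝ} (hx : x ≤ 1) (hT : 0 ≤ T) :
    (1 - x) ^ T ≤ exp (-(x * T)) := by
  rw [← neg_mul, exp_mul]
  exact rpow_le_rpow (sub_nonneg.2 hx) (one_sub_le_exp_neg x) hT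

lemma zipfLoss_div_harmonic_le {T : ℝ} (hT : 0 ≤ T) {K d : ℕ} (hKd : K ≤ d) (hd : 0 < d) :
    zipfLoss T d / harmonic d ≤ exp (-(T / K)) + (harmonic d - harmonic K) / harmonic d := by
  have hH : (0 : ℝ) < harmonic d := by exact_mod_cast harmonic_pos hd.ne'
  rw [div_le_iff₀ hH, add_mul, div_mul_cancel₀ _ hH.ne', div_eq_inv_mul]
  calc zipfLoss T d ≤ (1 - (K : ℝ)⁻¹) ^ T * harmonic d + (harmonic d - harmonic K) :=
        zipfLoss_le hT hKd
    _ ≤ _ := by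
        gcongr
        exact one_sub_rpow_le_exp_neg_mul (Nat.cast_inv_le_one K) hT

lemma le_zipfLoss_div_harmonic {T : ℝ} (hT : 1 ≤ T) {K d : ℕ} (hK : 0 < K) (hKd : K ≤ d) :
    (1 - T / K) * ((harmonic d - harmonic K) / harmonic d) ≤ zipfLoss T d / harmonic d := by
  have hbernoulli : 1 - T / K ≤ (1 - (K : ℝ)⁻¹) ^ T := by
    simpa [sub_eq_add_neg, div_eq_mul_inv] using
      one_add_mul_self_le_rpow_one_add (neg_le_neg (Nat.cast_inv_le_one K)) hT
  rw [← mul_div_assoc]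
  refine div_le_div_of_nonneg_right ?_ (by exact_mod_cast (harmonic_pos (hK.trans_le hKd).ne').le)
  calc (1 - T / K) * (harmonic d - harmonic K : ℝ)
      ≤ (1 - (K : ℝ)⁻¹) ^ T * (harmonic d - harmonic K) :=
        mul_le_mul_of_nonneg_right hbernoulli (sub_nonneg.2 (harmonic_le_harmonic hKd))
    _ ≤ zipfLoss T d := le_zipfLoss (by linarith) hK hKd

lemma abs_harmonic_floor_sub_log_le {y : ℝ} (hy : 1 ≤ y) :
    |(harmonic ⌊y⌋₊ : ℝ) - log y| ≤ 1 := by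
  have hlow := log_le_harmonic_floor y (by linarith)
  have hupp := harmonic_floor_le_one_add_log y hy
  rw [abs_le]
  constructor <;> linarith

lemma tendsto_div_of_abs_sub_mul_le {α : Type*} {l : Filter α} {f L : α → ℝ} {c C : ℝ}
    (hL : Tendsto L l atTop) (hf : ∀ᶠ x in l, |f x - c * L x| ≤ C) :
    Tendsto (fun x => f x / L x) l (𝓝 c) := by
  have herr : Tendsto (fun x => (f x - c * L x) / L x) l (𝓝 0) := by
    refine squeeze_zero_norm' ?_ ((tendsto_const_nhds (x := C)).div_atTop hL)
    filter_upwards [hf, hL.eventually_gt_atTop 0] with x hx hLx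
    rw [norm_eq_abs, abs_div, abs_of_pos hLx]
    exact div_le_div_of_nonneg_right hx hLx.le
  refine (by simpa using herr.const_add c : Tendsto _ l (𝓝 c)).congr' ?_
  filter_upwards [hL.eventually_gt_atTop 0] with x hLx
  field_simp
  ring

lemma tendsto_harmonic_sub_harmonic_floor_rpow_div {σ : ℝ} (hσ : 0 ≤ σ) :
    Tendsto (fun d : ℕ => ((harmonic d : ℝ) - harmonic ⌊(d : ℝ) ^ σ⌋₊) / harmonic d)
      atTop (𝓝 (1 - σ)) := by
  have hlog : Tendsto (fun d : ℕ => log d) atTop atTop :=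
    tendsto_log_atTop.comp tendsto_natCast_atTop_atTop
  have hH : ∀ᶠ d : ℕ in atTop, |(harmonic d : ℝ) - 1 * log d| ≤ 1 := by
    filter_upwards [eventually_ge_atTop 1] with d hd
    simpa using abs_harmonic_floor_sub_log_le (y := d) (by exact_mod_cast hd)
  have hHK :
      ∀ᶠ d : ℕ in atTop, |(harmonic ⌊(d : ℝ) ^ σ⌋₊ : ℝ) - σ * log d| ≤ 1 := by
    filter_upwards [eventually_ge_atTop 1] with d hd
    have hd' : (1 : ℝ) ≤ d := by exact_mod_cast hd
    rw [← log_rpow (by linarith)]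
    exact abs_harmonic_floor_sub_log_le (one_le_rpow hd' hσ)
  have hdiff : ∀ᶠ d : ℕ in atTop,
      |((harmonic d : ℝ) - harmonic ⌊(d : ℝ) ^ σ⌋₊) - (1 - σ) * log d| ≤ 2 := by
    filter_upwards [hH, hHK] with d h1 h2
    rw [abs_le] at *
    constructor <;> linarith
  have hratio := (tendsto_div_of_abs_sub_mul_le hlog hdiff).div
    (tendsto_div_of_abs_sub_mul_le hlog hH) one_ne_zero
  rw [div_one] at hratio
  refine hratio.congr' ?_
  filter_upwards [hlog.eventually_gt_atTop 0] with d hd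
  exact div_div_div_cancel_right₀ hd.ne' _ _

lemma tendsto_rpow_div_floor_rpow_nhds_zero {τ σ : ℝ} (hτσ : τ < σ) (hσ : 0 ≤ σ) :
    Tendsto (fun d : ℕ => (d : ℝ) ^ τ / ⌊(d : ℝ) ^ σ⌋₊) atTop (𝓝 0) := by
  have hpow : Tendsto (fun d : ℕ => 2 * (d : ℝ) ^ (τ - σ)) atTop (𝓝 0) := by
    simpa using ((tendsto_rpow_neg_atTop (by linarith : 0 < σ - τ)).comp
      tendsto_natCast_atTop_atTop).const_mul 2
  refine squeeze_zero' (Eventually.of_forall fun d => by positivity) ?_ hpow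
  filter_upwards [eventually_ge_atTop 1] with d hd
  have hd' : (1 : ℝ) ≤ d := by exact_mod_cast hd
  have hfloor := Nat.div_two_lt_floor (one_le_rpow hd' hσ)
  calc (d : ℝ) ^ τ / ⌊(d : ℝ) ^ σ⌋₊ ≤ (d : ℝ) ^ τ / ((d : ℝ) ^ σ / 2) :=
        div_le_div_of_nonneg_left (by positivity) (by positivity) hfloor.le
    _ = 2 * (d : ℝ) ^ (τ - σ) := by
        rw [rpow_sub (by positivity)]
        field_simp

lemma tendsto_rpow_div_floor_rpow_atTop {τ σ : ℝ} (hσ : 0 ≤ σ) (hστ : σ < τ) :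
    Tendsto (fun d : ℕ => (d : ℝ) ^ τ / ⌊(d : ℝ) ^ σ⌋₊) atTop atTop := by
  refine tendsto_atTop_mono' _ ?_
    ((tendsto_rpow_atTop (by linarith : 0 < τ - σ)).comp tendsto_natCast_atTop_atTop)
  filter_upwards [eventually_ge_atTop 1] with d hd
  have hd' : (1 : ℝ) ≤ d := by exact_mod_cast hd
  have hfloor : (0 : ℝ) < ⌊(d : ℝ) ^ σ⌋₊ := by
    exact_mod_cast Nat.floor_pos.2 (one_le_rpow hd' hσ)
  calc (d : ℝ) ^ (τ - σ) = (d : ℝ) ^ τ / (d : ℝ) ^ σ := rpow_sub (by positivity) _ _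
    _ ≤ (d : ℝ) ^ τ / ⌊(d : ℝ) ^ σ⌋₊ :=
        div_le_div_of_nonneg_left (by positivity) hfloor (Nat.floor_le (by positivity))

lemma eventually_lt_zipfLoss_div_harmonic {τ σ a : ℝ} (hτ : 0 ≤ τ) (hτσ : τ < σ)
    (hσ : σ ≤ 1) (ha : a < 1 - σ) :
    ∀ᶠ d : ℕ in atTop, a < zipfLoss ((d : ℝ) ^ τ) d / harmonic d := by
  have hσ0 : 0 ≤ σ := hτ.trans hτσ.le
  have hlower : Tendsto (fun d : ℕ => (1 - (d : ℝ) ^ τ / ⌊(d : ℝ) ^ σ⌋₊) *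
      (((harmonic d : ℝ) - harmonic ⌊(d : ℝ) ^ σ⌋₊) / harmonic d))
      atTop (𝓝 (1 - σ)) := by
    simpa using ((tendsto_const_nhds (x := (1 : ℝ))).sub
      (tendsto_rpow_div_floor_rpow_nhds_zero hτσ hσ0)).mul
      (tendsto_harmonic_sub_harmonic_floor_rpow_div hσ0)
  filter_upwards [hlower.eventually_const_lt ha, eventually_ge_atTop 1] with d hlt hd
  have hd' : (1 : ℝ) ≤ d := by exact_mod_cast hd
  exact hlt.trans_le (le_zipfLoss_div_harmonic (one_le_rpow hd' hτ)
    (Nat.floor_pos.2 (one_le_rpow hd' hσ0))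
    (Nat.floor_le_of_le (rpow_le_self_of_one_le hd' hσ)))

lemma eventually_zipfLoss_div_harmonic_lt {τ σ b : ℝ} (hσ : 0 ≤ σ) (hστ : σ < τ)
    (hσ1 : σ ≤ 1) (hb : 1 - σ < b) :
    ∀ᶠ d : ℕ in atTop, zipfLoss ((d : ℝ) ^ τ) d / harmonic d < b := by
  have hupper : Tendsto (fun d : ℕ => exp (-((d : ℝ) ^ τ / ⌊(d : ℝ) ^ σ⌋₊)) +
      ((harmonic d : ℝ) - harmonic ⌊(d : ℝ) ^ σ⌋₊) / harmonic d)
      atTop (𝓝 (1 - σ)) := by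
    simpa using (tendsto_exp_neg_atTop_nhds_zero.comp
      (tendsto_rpow_div_floor_rpow_atTop hσ hστ)).add
      (tendsto_harmonic_sub_harmonic_floor_rpow_div hσ)
  filter_upwards [hupper.eventually_lt_const hb, eventually_ge_atTop 1] with d hlt hd
  have hd' : (1 : ℝ) ≤ d := by exact_mod_cast hd
  exact (zipfLoss_div_harmonic_le (by positivity)
    (Nat.floor_le_of_le (rpow_le_self_of_one_le hd' hσ1)) hd).trans_lt hlt

theorem stmt9 (τ : ℝ) (hτ0 : 0 < τ) (hτ1 : τ < 1) :
    Tendsto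
      (fun d : ℕ =>
        (∑ k ∈ Finset.Icc 1 d,
          (k : ℝ) ^ (-1 : ℝ) * (1 - (k : ℝ) ^ (-1 : ℝ)) ^ (2 * ((d : ℝ) ^ τ / 2))) /
        (∑ k ∈ Finset.Icc 1 d, (k : ℝ) ^ (-1 : ℝ)))
      atTop (nhds (1 - τ)) := by
  have hr : ∀ d : ℕ, (∑ k ∈ Finset.Icc 1 d,
        (k : ℝ) ^ (-1 : ℝ) * (1 - (k : ℝ) ^ (-1 : ℝ)) ^ (2 * ((d : ℝ) ^ τ / 2))) /
      (∑ k ∈ Finset.Icc 1 d, (k : ℝ) ^ (-1 : ℝ)) =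
        zipfLoss ((d : ℝ) ^ τ) d / harmonic d := by
    intro d
    rw [show 2 * ((d : ℝ) ^ τ / 2) = (d : ℝ) ^ τ by ring]
    simp only [rpow_neg_one, sum_Icc_inv_natCast_eq_harmonic]
    rfl
  rw [tendsto_congr hr, tendsto_order]
  refine ⟨fun a ha => ?_, fun b hb => ?_⟩
  · obtain ⟨σ, hτσ, hσ⟩ : ∃ σ, τ < σ ∧ σ < min 1 (1 - a) :=
      exists_between (lt_min hτ1 (by linarith))
    exact eventually_lt_zipfLoss_div_harmonic hτ0.le hτσ (hσ.trans_le (min_le_left _ _)).le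
      (by linarith [min_le_right 1 (1 - a)])
  · obtain ⟨σ, hσ, hστ⟩ : ∃ σ, max 0 (1 - b) < σ ∧ σ < τ :=
      exists_between (max_lt hτ0 (by linarith))
    exact eventually_zipfLoss_div_harmonic_lt ((le_max_left _ _).trans hσ.le) hστ
      (hστ.trans hτ1).le (by linarith [le_max_right 0 (1 - b)])
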